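/- arXiv:1506.07046 — 2 statements merged into one kernel-verified Lean document; each statement's English description precedes it below -/
import Mathlib

section
/- Let m and k be positive integers, and consider the assignment problem with couples with 4m hospitals H = {h₁,…,h_{2m}, h'₁,…,h'_{2m}}; 2m(2k+1) single interns, each of whose M-rows equals 1/(2m) at every h'_j and 0 at every h_j; and m(2k+1) couples, each of whose members' M-rows equal 1/(2m) at every h_j and 0 at every h'_j (so every hospital has capacity 2k+1). Then in every deterministic assignment matrix M' for this problem, each hospital h_j is assigned at most k couples (hence coupled interns occupy at most 2k of its 2k+1 seats), so in total the coupled interns occupy at most 4mk seats in the hospitals {h₁,…,h_{2m}}, and consequently the single interns occupy at least 2m seats in the hospitals {h₁,…,h_{2m}}. -/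
open Finset

/-- `(S, C, H, M)` (with `I`, `H` types of interns and hospitals) is an assignment problem
with couples: `S` is the set of single interns, `C` the set of couples (ordered pairs of
members), every intern is a single or a member of a couple, members of couples are distinct
from each other, from the singles, and from members of other couples, `M ∈ [0,1]^{I×H}`,
each row of `M` sums to `1`, and both members of a couple have identical rows. -/
def IsCouplesProblem {I H : Type*} [Fintype I] [Fintype H]
    (S : Finset I) (C : Finset (I × I)) (M : I → H → ℝ) : Prop :=
  (∀ i : I, i ∈ S ∨ ∃ c ∈ C, i = c.1 ∨ i = c.2) ∧
  (∀ c ∈ C, c.1 ∉ S ∧ c.2 ∉ S ∧ c.1 ≠ c.2) ∧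
  (∀ c ∈ C, ∀ c' ∈ C, c ≠ c' →
    c.1 ≠ c'.1 ∧ c.1 ≠ c'.2 ∧ c.2 ≠ c'.1 ∧ c.2 ≠ c'.2) ∧
  (∀ (i : I) (h : H), 0 ≤ M i h ∧ M i h ≤ 1) ∧
  (∀ i : I, ∑ h : H, M i h = 1) ∧
  (∀ c ∈ C, ∀ h : H, M c.1 h = M c.2 h)

/-- `M'` is a deterministic assignment matrix with respect to the problem with couples `C`
and target matrix `M`: its entries are in `{0,1}`, rows sum to `1`, both members of each
couple have identical rows, and each column sum equals the capacity `q_h = ∑ i, M i h`. -/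
def IsDeterministicAssignment {I H : Type*} [Fintype I] [Fintype H]
    (C : Finset (I × I)) (M M' : I → H → ℝ) : Prop :=
  (∀ (i : I) (h : H), M' i h = 0 ∨ M' i h = 1) ∧
  (∀ i : I, ∑ h : H, M' i h = 1) ∧
  (∀ c ∈ C, ∀ h : H, M' c.1 h = M' c.2 h) ∧
  (∀ h : H, ∑ i : I, M' i h = ∑ i : I, M i h)


/-- Interns in the small-probabilities example: `2m(2k+1)` singles (the left summand) and
`m(2k+1)` couples, each couple having two members indexed by `Bool` (the right summand). -/
abbrev SPIntern (m k : ℕ) := Fin (2 * m * (2 * k + 1)) ⊕ (Fin (m * (2 * k + 1)) × Bool)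

/-- Hospitals in the small-probabilities example: `(true, j)` is `h_j` and `(false, j)` is
`h'_j`, for `j ∈ {1, …, 2m}`. -/
abbrev SPHospital (m : ℕ) := Bool × Fin (2 * m)

/-- The target matrix of the small-probabilities example: each single gets probability
`1/(2m)` at each `h'_j` (and `0` at each `h_j`), and each member of a couple gets
probability `1/(2m)` at each `h_j` (and `0` at each `h'_j`). -/
noncomputable def spM (m k : ℕ) : SPIntern m k → SPHospital m → ℝ
  | Sum.inl _, (b, _) => if b then 0 else 1 / (2 * m)
  | Sum.inr _, (b, _) => if b then 1 / (2 * m) else 0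

/-- The set of single interns of the small-probabilities example. -/
def spS (m k : ℕ) : Finset (SPIntern m k) := Finset.univ.image Sum.inl

/-- The set of couples of the small-probabilities example. -/
def spC (m k : ℕ) : Finset (SPIntern m k × SPIntern m k) :=
  Finset.univ.image fun j : Fin (m * (2 * k + 1)) =>
    (Sum.inr (j, false), Sum.inr (j, true))

/-!
Column `h_j` has capacity `2k+1` and is filled only by singles and couples, each assigned
couple taking two seats. Since singles take a nonnegative number of seats, at most `k`
couples fit, and the odd capacity leaves at least one seat to singles.
-/

noncomputable def assignedCouples {I H : Type*} (C : Finset (I × I)) (M' : I → H → ℝ) (h : H) :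
    Finset (I × I) :=
  C.filter fun c => M' c.1 h = 1 ∧ M' c.2 h = 1

namespace IsDeterministicAssignment

variable {I H : Type*} [Fintype I] [Fintype H] {C : Finset (I × I)} {M M' : I → H → ℝ}

lemma nonneg (hM' : IsDeterministicAssignment C M M') (i : I) (h : H) : 0 ≤ M' i h := by
  rcases hM'.1 i h with h0 | h1 <;> simp [*]

lemma sum_couples_eq_two_mul_card (hM' : IsDeterministicAssignment C M M') (h : H) :
    ∑ c ∈ C, (M' c.1 h + M' c.2 h) = 2 * #(assignedCouples C M' h) := by
  have hterm : ∀ c ∈ C, M' c.1 h + M' c.2 h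
      = 2 * if M' c.1 h = 1 ∧ M' c.2 h = 1 then 1 else 0 := by
    intro c hc
    rw [← hM'.2.2.1 c hc h]
    rcases hM'.1 c.1 h with h0 | h1 <;> norm_num [*]
  rw [sum_congr rfl hterm, ← mul_sum, sum_boole, assignedCouples]

end IsDeterministicAssignment

section SmallProbabilities

variable {m k : ℕ}

lemma sum_spS_add_sum_spC (f : SPIntern m k → ℝ) :
    ∑ s ∈ spS m k, f s + ∑ c ∈ spC m k, (f c.1 + f c.2) = ∑ i, f i := by
  have hinj : Function.Injective fun j : Fin (m * (2 * k + 1)) =>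
      ((Sum.inr (j, false), Sum.inr (j, true)) : SPIntern m k × SPIntern m k) :=
    fun a b hab => by simpa using congrArg Prod.fst hab
  rw [spS, spC, sum_image fun a _ b _ hab => Sum.inl_injective hab,
    sum_image fun a _ b _ hab => hinj hab, Fintype.sum_sum_type, Fintype.sum_prod_type]
  simp [add_comm]

lemma sum_spM_true (j : Fin (2 * m)) : ∑ i, spM m k i (true, j) = 2 * (k : ℝ) + 1 := by
  have hm : (m : ℝ) ≠ 0 := by exact_mod_cast (Nat.pos_of_mul_pos_left j.pos).ne'
  simp only [Fintype.sum_sum_type, spM, if_true, sum_const_zero, sum_const, card_univ,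
    Fintype.card_prod, Fintype.card_fin, Fintype.card_bool, nsmul_eq_mul]
  field_simp
  push_cast
  ring

lemma sum_spS_add_two_mul_card {M' : SPIntern m k → SPHospital m → ℝ}
    (hM' : IsDeterministicAssignment (spC m k) (spM m k) M') (j : Fin (2 * m)) :
    ∑ s ∈ spS m k, M' s (true, j) + 2 * #(assignedCouples (spC m k) M' (true, j))
      = 2 * (k : ℝ) + 1 := by
  rw [← hM'.sum_couples_eq_two_mul_card, sum_spS_add_sum_spC, hM'.2.2.2, sum_spM_true]

end SmallProbabilities

theorem small_probabilities_deterministic_general (m k : ℕ)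
    (M' : SPIntern m k → SPHospital m → ℝ)
    (hM' : IsDeterministicAssignment (spC m k) (spM m k) M') :
    (∀ j : Fin (2 * m),
      ((spC m k).filter fun c => M' c.1 (true, j) = 1 ∧ M' c.2 (true, j) = 1).card ≤ k) ∧
    (∑ j : Fin (2 * m), ∑ c ∈ spC m k, (M' c.1 (true, j) + M' c.2 (true, j))
        ≤ 4 * (m : ℝ) * k) ∧
    (2 * (m : ℝ) ≤ ∑ j : Fin (2 * m), ∑ s ∈ spS m k, M' s (true, j)) := by
  have hsingles_nonneg (j : Fin (2 * m)) : 0 ≤ ∑ s ∈ spS m k, M' s (true, j) :=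
    sum_nonneg fun s _ => hM'.nonneg s _
  have hcard (j : Fin (2 * m)) : #(assignedCouples (spC m k) M' (true, j)) ≤ k := by
    have := sum_spS_add_two_mul_card hM' j
    have := hsingles_nonneg j
    exact Nat.lt_succ_iff.mp (by exact_mod_cast (by linarith :
      (#(assignedCouples (spC m k) M' (true, j)) : ℝ) < k + 1))
  have hsingles (j : Fin (2 * m)) : 1 ≤ ∑ s ∈ spS m k, M' s (true, j) := by
    have := sum_spS_add_two_mul_card hM' j
    have : (#(assignedCouples (spC m k) M' (true, j)) : ℝ) ≤ k := by exact_mod_cast hcard j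
    linarith
  refine ⟨hcard, ?_, ?_⟩
  · calc ∑ j : Fin (2 * m), ∑ c ∈ spC m k, (M' c.1 (true, j) + M' c.2 (true, j))
        = ∑ j : Fin (2 * m), 2 * (#(assignedCouples (spC m k) M' (true, j)) : ℝ) :=
          sum_congr rfl fun j _ => hM'.sum_couples_eq_two_mul_card _
      _ ≤ ∑ _j : Fin (2 * m), 2 * (k : ℝ) :=
          sum_le_sum fun j _ => by gcongr; exact_mod_cast hcard j
      _ = 4 * (m : ℝ) * k := by simp; ring
  · calc 2 * (m : ℝ) = ∑ _j : Fin (2 * m), (1 : ℝ) := by simp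
      _ ≤ ∑ j : Fin (2 * m), ∑ s ∈ spS m k, M' s (true, j) :=
          sum_le_sum fun j _ => hsingles j

/-- in the small-probabilities example (for positive `m`, `k`), any
deterministic assignment matrix assigns at most `k` couples to each hospital `h_j`, the
coupled interns occupy at most `4mk` seats in total in the hospitals `h₁, …, h_{2m}`, and
consequently the single interns occupy at least `2m` seats in those hospitals. -/
theorem small_probabilities_deterministic (m k : ℕ) (hm : 0 < m) (hk : 0 < k)
    (M' : SPIntern m k → SPHospital m → ℝ)
    (hM' : IsDeterministicAssignment (spC m k) (spM m k) M') :
    (∀ j : Fin (2 * m),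
      ((spC m k).filter fun c => M' c.1 (true, j) = 1 ∧ M' c.2 (true, j) = 1).card ≤ k) ∧
    (∑ j : Fin (2 * m), ∑ c ∈ spC m k, (M' c.1 (true, j) + M' c.2 (true, j))
        ≤ 4 * (m : ℝ) * k) ∧
    (2 * (m : ℝ) ≤ ∑ j : Fin (2 * m), ∑ s ∈ spS m k, M' s (true, j)) :=
  small_probabilities_deterministic_general m k M' hM'
end

section
/- Let (S, C, H, M) be an assignment problem with couples in which every hospital capacity q_h is a positive integer and every hospital's singles' demand D_h = Σ_{s∈S} M_{s,h} satisfies D_h ≥ 2. Then there exists a convex combination {(λ^k, M^k)}_{k=1}^K of deterministic assignment matrices whose approximation error is at most 1/(min_{h∈H} D_h). -/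
open Finset

/-!
Round the couples first. Writing `μ_h` for the couples' demand of `h`, the couples' rows of `M`
(one per couple) form a row-stochastic matrix whose column sums lie in `[⌊μ_h⌋, ⌈μ_h⌉]`. Such
transportation polytopes with integral bounds are the convex hulls of their integral points, so
this matrix is a convex combination of integral couples' assignments `Y`, in which `h` receives
`n_h ∈ {⌊μ_h⌋, ⌈μ_h⌉}` couples, `n_h` having mean `μ_h`.

Given `Y`, the singles must fill the integral number `q_h - 2 n_h = D_h - 2 (n_h - μ_h)` of seats
of `h`. Take the fraction `2 (n_h - μ_h)⁺ / D_h` (at most one, as `D_h ≥ 2`) of every single's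
weight on `h` away and spread it over the hospitals in proportion to `(n_h - μ_h)⁻`: single `s`
moves by at most `4 ∑_h M_{s,h} (n_h - μ_h)⁺ / D_h` in `ℓ¹`, and rounding the new singles' matrix
in its own transportation polytope completes `Y` to deterministic assignments. Couples are thus
reproduced exactly on average, while `E (n_h - μ_h)⁺ = (⌈μ_h⌉ - μ_h)(μ_h - ⌊μ_h⌋) ≤ 1/4` bounds
the error of `s` by `∑_h M_{s,h} / D_h ≤ 1 / min_h D_h`.

The transportation polytope is integral because at a point with a fractional entry there are more
fractional entries than independent row constraints and integral column constraints touching them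
(each such constraint sees at least two of them), so a nonzero direction supported on the
fractional entries preserves all row sums and integral column sums. Moving both ways along it until an entry or a
column sum becomes integral writes the point as a convex combination of two points with fewer
fractional entries and column sums.
-/

theorem Finset.exists_ne_notMem_of_sum_mem {ι R S : Type*} [AddCommGroup R] [SetLike S R]
    [AddSubgroupClass S R] {K : S} {s : Finset ι} {f : ι → R} {i : ι}
    (hs : ∑ j ∈ s, f j ∈ K) (hi : i ∈ s) (hfi : f i ∉ K) : ∃ j ∈ s, j ≠ i ∧ f j ∉ K := by
  classical
  by_contra! hrest
  have hrest : ∑ j ∈ s.erase i, f j ∈ K :=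
    sum_mem fun j hj => hrest j (mem_of_mem_erase hj) (ne_of_mem_erase hj)
  exact hfi (by simpa [← add_sum_erase s f hi] using sub_mem hs hrest)

theorem Finset.two_mul_card_image_le_card {α β : Type*} [DecidableEq β] {s : Finset α}
    (f : α → β) (hs : ∀ x ∈ s, ∃ y ∈ s, y ≠ x ∧ f y = f x) : 2 * #(s.image f) ≤ #s := by
  refine mul_card_image_le_card s 2 fun b hb => ?_
  obtain ⟨x, hx, rfl⟩ := mem_image.mp hb
  obtain ⟨y, hy, hyx, hfy⟩ := hs x hx
  exact one_lt_card.mpr ⟨x, mem_filter.mpr ⟨hx, rfl⟩, y, mem_filter.mpr ⟨hy, hfy⟩, hyx.symm⟩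

theorem subset_convexHull_of_forall_mem_segment {𝕜 E : Type*} [Field 𝕜] [LinearOrder 𝕜]
    [IsStrictOrderedRing 𝕜] [AddCommGroup E] [Module 𝕜 E] {P Q : Set E} (f : E → ℕ)
    (h : ∀ x ∈ P, x ∉ Q → ∃ y ∈ P, ∃ z ∈ P, f y < f x ∧ f z < f x ∧ x ∈ segment 𝕜 y z) :
    P ⊆ convexHull 𝕜 (P ∩ Q) := by
  intro x hx
  induction hn : f x using Nat.strong_induction_on generalizing x with
  | _ n ih =>
    by_cases hxQ : x ∈ Q
    · exact subset_convexHull 𝕜 _ ⟨hx, hxQ⟩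
    obtain ⟨y, hy, z, hz, hyx, hzx, hseg⟩ := h x hx hxQ
    exact (convex_convexHull 𝕜 _).segment_subset (ih _ (hn ▸ hyx) hy rfl)
      (ih _ (hn ▸ hzx) hz rfl) hseg

theorem mem_segment_add_smul_sub_smul {E : Type*} [AddCommGroup E] [Module ℝ E] (x v : E)
    {s t : ℝ} (hs : 0 < s) (ht : 0 < t) : x ∈ segment ℝ (x + s • v) (x - t • v) := by
  have hst : s + t ≠ 0 := by positivity
  refine ⟨t / (s + t), s / (s + t), by positivity, by positivity, by field_simp; ring, ?_⟩
  match_scalars <;> field_simp <;> ring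

noncomputable def stepToBoundary (lo hi u v : ℝ) : ℝ :=
  if 0 < v then (hi - u) / v else (lo - u) / v

theorem stepToBoundary_spec {lo hi u v : ℝ} (hu : u ∈ Set.Ioo lo hi) (hv : v ≠ 0) :
    0 < stepToBoundary lo hi u v ∧
      (u + stepToBoundary lo hi u v * v = lo ∨ u + stepToBoundary lo hi u v * v = hi) ∧
      ∀ t, 0 ≤ t → t ≤ stepToBoundary lo hi u v → u + t * v ∈ Set.Icc lo hi := by
  obtain ⟨hlo, hhi⟩ := hu
  unfold stepToBoundary
  split_ifs with hpos
  · refine ⟨div_pos (by linarith) hpos, .inr (by field_simp; ring), fun t ht hts => ?_⟩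
    rw [le_div_iff₀ hpos] at hts
    constructor <;> nlinarith
  · have hneg : v < 0 := lt_of_le_of_ne (not_lt.mp hpos) hv
    refine ⟨div_pos_of_neg_of_neg (by linarith) hneg, .inl (by field_simp; ring),
      fun t ht hts => ?_⟩
    rw [le_div_iff_of_neg hneg] at hts
    constructor <;> nlinarith

theorem exists_pos_step_to_boundary {J : Type*} [Fintype J] {u v lo hi : J → ℝ}
    (hu : ∀ j, u j ∈ Set.Icc (lo j) (hi j))
    (hstrict : ∀ j, v j ≠ 0 → u j ∈ Set.Ioo (lo j) (hi j)) (hv : v ≠ 0) :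
    ∃ ε : ℝ, 0 < ε ∧ (∀ j, u j + ε * v j ∈ Set.Icc (lo j) (hi j)) ∧
      ∃ j, v j ≠ 0 ∧ (u j + ε * v j = lo j ∨ u j + ε * v j = hi j) := by
  classical
  let s j := stepToBoundary (lo j) (hi j) (u j) (v j)
  have hne : ({j | v j ≠ 0} : Finset J).Nonempty := by
    obtain ⟨j, hj⟩ := Function.ne_iff.mp hv
    exact ⟨j, by simpa using hj⟩
  obtain ⟨j₀, hj₀, hmin⟩ := exists_min_image _ s hne
  have hj₀ : v j₀ ≠ 0 := by simpa using hj₀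
  obtain ⟨hpos, hhit, -⟩ := stepToBoundary_spec (hstrict j₀ hj₀) hj₀
  refine ⟨s j₀, hpos, fun j => ?_, j₀, hj₀, hhit⟩
  by_cases hj : v j = 0
  · simpa [hj] using hu j
  · exact (stepToBoundary_spec (hstrict j hj) hj).2.2 _ hpos.le (hmin j (by simpa using hj))

section TransportPolytope

variable {A B : Type*} [Fintype A]

def entriesAndColSums (X : A → B → ℝ) : A × B ⊕ B → ℝ :=
  Sum.elim (fun p => X p.1 p.2) fun b => ∑ a, X a b

theorem entriesAndColSums_add_smul (X d : A → B → ℝ) (ε : ℝ) :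
    entriesAndColSums (X + ε • d) = entriesAndColSums X + ε • entriesAndColSums d := by
  funext j
  cases j <;> simp [entriesAndColSums, sum_add_distrib, mul_sum]

theorem entriesAndColSums_neg (d : A → B → ℝ) :
    entriesAndColSums (-d) = -entriesAndColSums d := by
  funext j
  cases j <;> simp [entriesAndColSums]

-- `(⊥ : Subring ℝ)` is the set of integers.
noncomputable def fracCount (X : A → B → ℝ) : ℕ :=
  {j | entriesAndColSums X j ∉ (⊥ : Subring ℝ)}.ncard

variable [Fintype B]

def transportPolytope (α β : B → ℝ) : Set (A → B → ℝ) :=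
  {X | (∀ a b, 0 ≤ X a b) ∧ (∀ a, ∑ b, X a b = 1) ∧ ∀ b, ∑ a, X a b ∈ Set.Icc (α b) (β b)}

def integralMatrices : Set (A → B → ℝ) := {X | ∀ a b, X a b ∈ (⊥ : Subring ℝ)}

theorem sum_sum_eq_card {X : A → B → ℝ} (hrow : ∀ a, ∑ b, X a b = 1) :
    ∑ b, ∑ a, X a b = Fintype.card A := by
  rw [sum_comm]
  simp [hrow]

theorem sum_row_eq_zero_of_forall_ne {d : A → B → ℝ} {a₀ : A} (hcol : ∀ b, ∑ a, d a b = 0)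
    (hrow : ∀ a ≠ a₀, ∑ b, d a b = 0) : ∑ b, d a₀ b = 0 := by
  have hsum := sum_eq_single (s := univ) (f := fun a => ∑ b, d a b) a₀
    (fun a _ ha => hrow a ha) (by simp)
  rw [← hsum, sum_comm]
  simp [hcol]

theorem exists_ne_zero_supported_sums_eq_zero (F : Finset (A × B)) (R : Finset A)
    (C : Finset B) (hcard : #R + #C < #F) :
    ∃ d : A → B → ℝ, d ≠ 0 ∧ (∀ a b, d a b ≠ 0 → (a, b) ∈ F) ∧
      (∀ a ∈ R, ∑ b, d a b = 0) ∧ ∀ b ∈ C, ∑ a, d a b = 0 := by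
  classical
  let ext (v : F → ℝ) (a : A) (b : B) : ℝ := if h : (a, b) ∈ F then v ⟨(a, b), h⟩ else 0
  let L : (F → ℝ) →ₗ[ℝ] (R → ℝ) × (C → ℝ) :=
    { toFun v := (fun a => ∑ b, ext v a.1 b, fun b => ∑ a, ext v a b.1)
      map_add' v w := by
        ext <;> simp only [ext, Pi.add_apply, Prod.fst_add, Prod.snd_add, ← sum_add_distrib] <;>
          exact sum_congr rfl fun _ _ => by split_ifs <;> simp
      map_smul' c v := by
        ext <;> simp only [ext, Pi.smul_apply, Prod.smul_fst, Prod.smul_snd, smul_eq_mul,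
          RingHom.id_apply, mul_sum] <;>
          exact sum_congr rfl fun _ _ => by split_ifs <;> simp }
  obtain ⟨v, hv, hv0⟩ :=
    (Submodule.ne_bot_iff _).mp (LinearMap.ker_ne_bot_of_finrank_lt (f := L) (by simpa using hcard))
  have hLv : L v = 0 := hv
  refine ⟨ext v, fun h0 => hv0 (funext fun p => ?_), fun a b hab => ?_,
    fun a ha => congrFun (congrArg Prod.fst hLv) ⟨a, ha⟩,
    fun b hb => congrFun (congrArg Prod.snd hLv) ⟨b, hb⟩⟩
  · simpa [ext] using congrFun (congrFun h0 p.1.1) p.1.2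
  · by_contra hF
    exact hab (dif_neg hF)

variable {α β : B → ℝ} {X : A → B → ℝ}

theorem le_one_of_mem_transportPolytope (hX : X ∈ transportPolytope α β) (a : A) (b : B) :
    X a b ≤ 1 :=
  hX.2.1 a ▸ single_le_sum (fun b _ => hX.1 a b) (mem_univ b)

theorem eq_zero_or_eq_one_of_mem_integralMatrices (hX : X ∈ transportPolytope α β)
    (hXint : X ∈ integralMatrices) (a : A) (b : B) : X a b = 0 ∨ X a b = 1 := by
  obtain ⟨z, hz⟩ := Subring.mem_bot.mp (hXint a b)
  have h0 : (0 : ℝ) ≤ z := hz ▸ hX.1 a b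
  have h1 : (z : ℝ) ≤ 1 := hz ▸ le_one_of_mem_transportPolytope hX a b
  obtain rfl | rfl : z = 0 ∨ z = 1 := by
    have : 0 ≤ z := by exact_mod_cast h0
    have : z ≤ 1 := by exact_mod_cast h1
    omega
  exacts [.inl (by simp [← hz]), .inr (by simp [← hz])]

theorem mem_transportPolytope_iff :
    X ∈ transportPolytope α β ↔ (∀ a, ∑ b, X a b = 1) ∧
      ∀ j, entriesAndColSums X j ∈ Set.Icc (Sum.elim 0 α j) (Sum.elim 1 β j) := by
  refine ⟨fun hX => ⟨hX.2.1, ?_⟩, fun ⟨hrow, hbox⟩ => ⟨fun a b => (hbox (.inl (a, b))).1, hrow,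
    fun b => hbox (.inr b)⟩⟩
  rintro (⟨a, b⟩ | b)
  · exact ⟨hX.1 a b, le_one_of_mem_transportPolytope hX a b⟩
  · exact hX.2.2 b

theorem exists_pos_add_smul_mem_fracCount_lt (hα : ∀ b, α b ∈ (⊥ : Subring ℝ))
    (hβ : ∀ b, β b ∈ (⊥ : Subring ℝ)) (hX : X ∈ transportPolytope α β) {d : A → B → ℝ}
    (hd : d ≠ 0) (hdrow : ∀ a, ∑ b, d a b = 0)
    (hdfrac : ∀ j, entriesAndColSums d j ≠ 0 → entriesAndColSums X j ∉ (⊥ : Subring ℝ)) :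
    ∃ ε : ℝ, 0 < ε ∧ X + ε • d ∈ transportPolytope α β ∧ fracCount (X + ε • d) < fracCount X := by
  obtain ⟨hrow, hbox⟩ := mem_transportPolytope_iff.mp hX
  have hlo : ∀ j : A × B ⊕ B, Sum.elim 0 α j ∈ (⊥ : Subring ℝ) := by rintro (_ | b) <;> simp [hα]
  have hhi : ∀ j : A × B ⊕ B, Sum.elim 1 β j ∈ (⊥ : Subring ℝ) := by rintro (_ | b) <;> simp [hβ]
  have hstrict : ∀ j, entriesAndColSums d j ≠ 0 →
      entriesAndColSums X j ∈ Set.Ioo (Sum.elim 0 α j) (Sum.elim 1 β j) := fun j hj =>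
    ⟨(hbox j).1.lt_of_ne fun h => hdfrac j hj (h ▸ hlo j),
      (hbox j).2.lt_of_ne fun h => hdfrac j hj (h ▸ hhi j)⟩
  have hv : entriesAndColSums d ≠ 0 := fun h =>
    hd (funext₂ fun a b => congrFun h (.inl (a, b)))
  obtain ⟨ε, hε, hbox', j₀, hj₀, hhit⟩ := exists_pos_step_to_boundary hbox hstrict hv
  refine ⟨ε, hε, mem_transportPolytope_iff.mpr ⟨fun a => ?_, ?_⟩, Set.ncard_lt_ncard ?_⟩
  · simp [sum_add_distrib, ← mul_sum, hrow, hdrow]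
  · simpa [entriesAndColSums_add_smul] using hbox'
  simp only [entriesAndColSums_add_smul, Pi.add_apply, Pi.smul_apply, smul_eq_mul]
  refine (Set.ssubset_iff_of_subset fun j hj => ?_).mpr ⟨j₀, hdfrac j₀ hj₀, ?_⟩
  · by_cases hdj : entriesAndColSums d j = 0
    · simpa [hdj] using hj
    · exact hdfrac j hdj
  · rw [Set.mem_ofPred_eq, not_not]
    rcases hhit with h | h <;> rw [h]
    exacts [hlo j₀, hhi j₀]

theorem exists_fractional_direction_of_card_lt {F : Finset (A × B)}
    (hF : ∀ a b, (a, b) ∈ F ↔ X a b ∉ (⊥ : Subring ℝ)) (R : Finset A) {C : Finset B}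
    (hC : ∀ a b, (a, b) ∈ F → ∑ a', X a' b ∈ (⊥ : Subring ℝ) → b ∈ C) (hcard : #R + #C < #F) :
    ∃ d : A → B → ℝ, d ≠ 0 ∧ (∀ a ∈ R, ∑ b, d a b = 0) ∧
      (∀ a, (∀ b, X a b ∈ (⊥ : Subring ℝ)) → ∑ b, d a b = 0) ∧
      ∀ j, entriesAndColSums d j ≠ 0 → entriesAndColSums X j ∉ (⊥ : Subring ℝ) := by
  obtain ⟨d, hd0, hsupp, hrow, hcol⟩ := exists_ne_zero_supported_sums_eq_zero F R C hcard
  refine ⟨d, hd0, hrow, fun a ha => sum_eq_zero fun b _ => ?_, ?_⟩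
  · by_contra h
    exact (hF a b).mp (hsupp a b h) (ha b)
  rintro (⟨a, b⟩ | b) h
  · exact (hF a b).mp (hsupp a b h)
  · intro hXb
    obtain ⟨a, -, ha⟩ := exists_ne_zero_of_sum_ne_zero h
    exact h (hcol b (hC a b (hsupp a b ha) hXb))

theorem exists_fractional_direction (hrow : ∀ a, ∑ b, X a b ∈ (⊥ : Subring ℝ))
    (hX : X ∉ integralMatrices) :
    ∃ d : A → B → ℝ, d ≠ 0 ∧ (∀ a, ∑ b, d a b = 0) ∧
      ∀ j, entriesAndColSums d j ≠ 0 → entriesAndColSums X j ∉ (⊥ : Subring ℝ) := by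
  classical
  set K := (⊥ : Subring ℝ)
  let F : Finset (A × B) := {p | X p.1 p.2 ∉ K}
  let Fi : Finset (A × B) := {p ∈ F | ∑ a, X a p.2 ∈ K}
  have hF : ∀ a b, (a, b) ∈ F ↔ X a b ∉ K := by simp [F]
  set R := F.image Prod.fst
  set C := Fi.image Prod.snd
  have hC : ∀ a b, (a, b) ∈ F → ∑ a', X a' b ∈ K → b ∈ C := fun a b hab hb =>
    mem_image.mpr ⟨(a, b), mem_filter.mpr ⟨hab, hb⟩, rfl⟩
  have hR2 : 2 * #R ≤ #F := two_mul_card_image_le_card _ fun p hp => by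
    obtain ⟨b, -, hb, hXb⟩ :=
      exists_ne_notMem_of_sum_mem (hrow p.1) (mem_univ p.2) ((hF _ _).mp hp)
    exact ⟨(p.1, b), (hF _ _).mpr hXb, fun h => hb (congrArg Prod.snd h), rfl⟩
  have hC2 : 2 * #C ≤ #Fi := two_mul_card_image_le_card _ fun p hp => by
    obtain ⟨hpF, hcol⟩ := mem_filter.mp hp
    obtain ⟨a, -, ha, hXa⟩ :=
      exists_ne_notMem_of_sum_mem hcol (mem_univ p.1) ((hF _ _).mp hpF)
    exact ⟨(a, p.2), mem_filter.mpr ⟨(hF _ _).mpr hXa, hcol⟩,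
      fun h => ha (congrArg Prod.fst h), rfl⟩
  have hrowR : ∀ a ∉ R, ∀ b, X a b ∈ K := fun a ha b => by
    by_contra h
    exact ha (mem_image_of_mem _ ((hF a b).mpr h))
  obtain ⟨a, b, hab⟩ : ∃ a b, X a b ∉ K := by simpa [integralMatrices] using hX
  have haR : a ∈ R := mem_image_of_mem _ ((hF a b).mpr hab)
  by_cases hFi : Fi = F
  · -- the constraints are then dependent (the row sums and the column sums add up to the same
    -- total), so the row constraint of `a` can be dropped
    have hCF : 2 * #C ≤ #F := hFi ▸ hC2
    have hRpos : 0 < #R := card_pos.mpr ⟨a, haR⟩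
    obtain ⟨d, hd0, hrowd, hrowd', hdX⟩ := exists_fractional_direction_of_card_lt hF (R.erase a)
      hC (by rw [card_erase_of_mem haR]; omega)
    have hcol : ∀ b, ∑ a, d a b = 0 := fun b => by
      by_contra h
      obtain ⟨a, -, ha⟩ := exists_ne_zero_of_sum_ne_zero h
      have haF : (a, b) ∈ F := (hF a b).mpr (hdX (.inl (a, b)) ha)
      exact hdX (.inr b) h (mem_filter.mp (hFi ▸ haF : (a, b) ∈ Fi)).2
    have hrow' : ∀ a' ≠ a, ∑ b, d a' b = 0 := fun a' ha' => by
      by_cases ha'R : a' ∈ R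
      exacts [hrowd a' (mem_erase.mpr ⟨ha', ha'R⟩), hrowd' a' (hrowR a' ha'R)]
    refine ⟨d, hd0, fun a' => ?_, hdX⟩
    obtain rfl | ha' := eq_or_ne a' a
    exacts [sum_row_eq_zero_of_forall_ne hcol hrow', hrow' a' ha']
  · have : #Fi < #F := card_lt_card ((filter_subset _ _).ssubset_of_ne hFi)
    obtain ⟨d, hd0, hrowd, hrowd', hdX⟩ :=
      exists_fractional_direction_of_card_lt hF R hC (by omega)
    exact ⟨d, hd0, fun a' => if h : a' ∈ R then hrowd a' h else hrowd' a' (hrowR a' h), hdX⟩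

theorem exists_mem_segment_fracCount_lt (hα : ∀ b, α b ∈ (⊥ : Subring ℝ))
    (hβ : ∀ b, β b ∈ (⊥ : Subring ℝ)) (hX : X ∈ transportPolytope α β)
    (hXint : X ∉ integralMatrices) :
    ∃ Y ∈ transportPolytope α β, ∃ Z ∈ transportPolytope α β,
      fracCount Y < fracCount X ∧ fracCount Z < fracCount X ∧ X ∈ segment ℝ Y Z := by
  obtain ⟨d, hd0, hdrow, hdX⟩ := exists_fractional_direction (fun a => hX.2.1 a ▸ one_mem _) hXint
  obtain ⟨s, hs, hYP, hY⟩ := exists_pos_add_smul_mem_fracCount_lt hα hβ hX hd0 hdrow hdX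
  obtain ⟨t, ht, hZP, hZ⟩ := exists_pos_add_smul_mem_fracCount_lt hα hβ hX (neg_ne_zero.mpr hd0)
    (by simpa using hdrow) (by simpa [entriesAndColSums_neg] using hdX)
  refine ⟨_, hYP, _, hZP, hY, hZ, ?_⟩
  simpa [← sub_eq_add_neg] using mem_segment_add_smul_sub_smul X d hs ht

theorem transportPolytope_subset_convexHull (hα : ∀ b, α b ∈ (⊥ : Subring ℝ))
    (hβ : ∀ b, β b ∈ (⊥ : Subring ℝ)) :
    (transportPolytope α β : Set (A → B → ℝ)) ⊆
      convexHull ℝ (transportPolytope α β ∩ integralMatrices) :=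
  subset_convexHull_of_forall_mem_segment fracCount fun _ hX hXint =>
    exists_mem_segment_fracCount_lt hα hβ hX hXint

theorem exists_mem_transportPolytope_shift_colSums_of_pos (hX0 : ∀ a b, 0 ≤ X a b)
    (hrow : ∀ a, ∑ b, X a b = 1) (hcol : ∀ b, 0 < ∑ a, X a b) {dm dp : B → ℝ}
    (hdm0 : ∀ b, 0 ≤ dm b) (hdp0 : ∀ b, 0 ≤ dp b) (hdm : ∀ b, dm b ≤ ∑ a, X a b)
    (hsum : ∑ b, dm b = ∑ b, dp b) (hT : 0 < ∑ b, dp b) :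
    ∃ Z ∈ transportPolytope (fun b => ∑ a, X a b + dp b - dm b)
      (fun b => ∑ a, X a b + dp b - dm b),
      ∀ a, ∑ b, |X a b - Z a b| ≤ 2 * ∑ b, X a b * dm b / ∑ a', X a' b := by
  set D := fun b => ∑ a, X a b
  set T := ∑ b, dp b
  set m := fun a => ∑ b, X a b * dm b / D b
  have hm0 : ∀ a, 0 ≤ m a := fun a =>
    sum_nonneg fun b _ => div_nonneg (mul_nonneg (hX0 a b) (hdm0 b)) (hcol b).le
  have hmsum : ∑ a, m a = T := by
    rw [← hsum, sum_comm]
    refine sum_congr rfl fun b _ => ?_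
    rw [← sum_div, ← sum_mul, div_eq_iff (hcol b).ne', mul_comm]
  -- remove the fraction `dm b / D b` of every entry of column `b`, and spread the mass `m a`
  -- removed from row `a` over the columns in proportion to `dp`
  refine ⟨fun a b => X a b * (1 - dm b / D b) + m a * dp b / T, ⟨fun a b => ?_, fun a => ?_,
    fun b => ?_⟩, fun a => ?_⟩
  · have : dm b / D b ≤ 1 := (div_le_one (hcol b)).mpr (hdm b)
    have := hm0 a
    have := hdp0 b
    have := hX0 a b
    positivity
  · simp only [sum_add_distrib, mul_sub, mul_one, sum_sub_distrib, hrow, ← mul_div_assoc,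
      ← mul_sum, ← sum_div]
    field_simp
    ring
  · have hZ : ∑ a, (X a b * (1 - dm b / D b) + m a * dp b / T) = D b + dp b - dm b := by
      rw [sum_add_distrib, ← sum_mul, ← sum_div, ← sum_mul, hmsum]
      simp only [D]
      field_simp [(hcol b).ne']
      ring
    exact ⟨hZ.ge, hZ.le⟩
  · calc ∑ b, |X a b - (X a b * (1 - dm b / D b) + m a * dp b / T)|
        = ∑ b, |X a b * dm b / D b - m a * dp b / T| := by
          congr! 2 with b
          ring
      _ ≤ ∑ b, (X a b * dm b / D b + m a * dp b / T) := by
          refine sum_le_sum fun b _ => abs_sub_le_iff.mpr ⟨?_, ?_⟩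
          · have := div_nonneg (mul_nonneg (hm0 a) (hdp0 b)) hT.le
            linarith
          · have := div_nonneg (mul_nonneg (hX0 a b) (hdm0 b)) (hcol b).le
            linarith
      _ = 2 * m a := by
          rw [sum_add_distrib, ← sum_div, ← mul_sum]
          field_simp
          ring

theorem exists_mem_transportPolytope_shift_colSums (hX0 : ∀ a b, 0 ≤ X a b)
    (hrow : ∀ a, ∑ b, X a b = 1) (hcol : ∀ b, 0 < ∑ a, X a b) {dm dp : B → ℝ}
    (hdm0 : ∀ b, 0 ≤ dm b) (hdp0 : ∀ b, 0 ≤ dp b) (hdm : ∀ b, dm b ≤ ∑ a, X a b)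
    (hsum : ∑ b, dm b = ∑ b, dp b) :
    ∃ Z ∈ transportPolytope (fun b => ∑ a, X a b + dp b - dm b)
      (fun b => ∑ a, X a b + dp b - dm b),
      ∀ a, ∑ b, |X a b - Z a b| ≤ 2 * ∑ b, X a b * dm b / ∑ a', X a' b := by
  rcases (sum_nonneg fun b _ => hdp0 b : 0 ≤ ∑ b, dp b).eq_or_lt with hT | hT
  · have hdp : ∀ b, dp b = 0 := fun b =>
      (sum_eq_zero_iff_of_nonneg fun b _ => hdp0 b).mp hT.symm b (mem_univ b)
    have hdm : ∀ b, dm b = 0 := fun b =>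
      (sum_eq_zero_iff_of_nonneg fun b _ => hdm0 b).mp (hsum.trans hT.symm) b (mem_univ b)
    exact ⟨X, ⟨hX0, hrow, fun b => by simp [hdp, hdm]⟩, fun a => by simp [hdm]⟩
  · exact exists_mem_transportPolytope_shift_colSums_of_pos hX0 hrow hcol hdm0 hdp0 hdm hsum hT

end TransportPolytope

theorem posPart_sub_le_ceil_sub_mul {μ x : ℝ} (hx : x ∈ (⊥ : Subring ℝ))
    (hμ : x ∈ Set.Icc (⌊μ⌋ : ℝ) ⌈μ⌉) : (x - μ)⁺ ≤ (⌈μ⌉ - μ) * (x - ⌊μ⌋) := by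
  obtain ⟨z, rfl⟩ := Subring.mem_bot.mp hx
  have hlo : ⌊μ⌋ ≤ z := by exact_mod_cast hμ.1
  have hhi : z ≤ ⌈μ⌉ := by exact_mod_cast hμ.2
  rcases hlo.eq_or_lt with rfl | hlt
  · simp [Int.floor_le]
  · have := Int.ceil_le_floor_add_one μ
    obtain rfl : z = ⌈μ⌉ := by omega
    rw [← Int.cast_sub, show ⌈μ⌉ - ⌊μ⌋ = 1 by omega, Int.cast_one, mul_one,
      posPart_eq_self.mpr (sub_nonneg.mpr (Int.le_ceil μ))]

theorem ceil_sub_mul_sub_floor_le (μ : ℝ) : (⌈μ⌉ - μ) * (μ - ⌊μ⌋) ≤ 1 / 4 := by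
  have h1 := Int.floor_le μ
  have h2 := Int.le_ceil μ
  have h3 : (⌈μ⌉ : ℝ) ≤ ⌊μ⌋ + 1 := by exact_mod_cast Int.ceil_le_floor_add_one μ
  nlinarith [sq_nonneg ((⌈μ⌉ - μ) - (μ - ⌊μ⌋))]

theorem sum_mul_posPart_sub_le_quarter {ι : Type*} [Fintype ι] {p n : ι → ℝ} {μ : ℝ}
    (hp0 : ∀ ω, 0 ≤ p ω) (hp1 : ∑ ω, p ω = 1) (hn : ∀ ω, n ω ∈ (⊥ : Subring ℝ))
    (hnμ : ∀ ω, n ω ∈ Set.Icc (⌊μ⌋ : ℝ) ⌈μ⌉) (hmean : ∑ ω, p ω * n ω = μ) :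
    ∑ ω, p ω * (n ω - μ)⁺ ≤ 1 / 4 :=
  calc ∑ ω, p ω * (n ω - μ)⁺
      ≤ ∑ ω, p ω * ((⌈μ⌉ - μ) * (n ω - ⌊μ⌋)) :=
        sum_le_sum fun ω _ => mul_le_mul_of_nonneg_left (posPart_sub_le_ceil_sub_mul (hn ω) (hnμ ω))
          (hp0 ω)
    _ = (⌈μ⌉ - μ) * (μ - ⌊μ⌋) := by
        simp only [mul_left_comm (p _), ← mul_sum, mul_sub, sum_sub_distrib, hmean, ← sum_mul, hp1,
          one_mul]
    _ ≤ 1 / 4 := ceil_sub_mul_sub_floor_le μ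

theorem sum_abs_sub_sum_mul_le {ι κ : Type*} [Fintype ι] [Fintype κ] (x : κ → ℝ) {p : ι → ℝ}
    (hp0 : ∀ ω, 0 ≤ p ω) (hp1 : ∑ ω, p ω = 1) (y : ι → κ → ℝ) :
    ∑ k, |x k - ∑ ω, p ω * y ω k| ≤ ∑ ω, p ω * ∑ k, |x k - y ω k| := by
  calc ∑ k, |x k - ∑ ω, p ω * y ω k| = ∑ k, |∑ ω, p ω * (x k - y ω k)| := by
        simp only [mul_sub, sum_sub_distrib, ← sum_mul, hp1, one_mul]
    _ ≤ ∑ k, ∑ ω, p ω * |x k - y ω k| := sum_le_sum fun k _ =>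
        (abs_sum_le_sum_abs _ _).trans_eq (sum_congr rfl fun ω _ => by
          rw [abs_mul, abs_of_nonneg (hp0 ω)])
    _ = ∑ ω, p ω * ∑ k, |x k - y ω k| := by
        rw [sum_comm]
        simp only [mul_sum]

theorem exists_fin_combination_of_mem_convexHull {E : Type*} [AddCommGroup E] [Module ℝ E] {s : Set E}
    {x : E} (hx : x ∈ convexHull ℝ s) :
    ∃ (K : ℕ) (w : Fin K → ℝ) (z : Fin K → E), (∀ k, 0 ≤ w k) ∧ ∑ k, w k = 1 ∧
      (∀ k, z k ∈ s) ∧ ∑ k, w k • z k = x := by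
  obtain ⟨ι, _, w, z, hw0, hw1, hz, rfl⟩ := mem_convexHull_iff_exists_fintype.mp hx
  let e := Fintype.equivFin ι
  exact ⟨_, w ∘ e.symm, z ∘ e.symm, fun k => hw0 _, by simpa [e.symm.sum_comp w] using hw1,
    fun k => hz _, e.symm.sum_comp fun i => w i • z i⟩

section Couples

variable {I H : Type*} {S : Finset I} {C : Finset (I × I)}

-- In a couples problem exactly one term of the sum is nonzero.
open Classical in
noncomputable def assemble (Z : S → H → ℝ) (Y : C → H → ℝ) (i : I) : H → ℝ :=
  if hi : i ∈ S then Z ⟨i, hi⟩ else ∑ c : C, if i = c.1.1 ∨ i = c.1.2 then Y c else 0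

theorem assemble_of_mem (Z : S → H → ℝ) (Y : C → H → ℝ) {i : I} (hi : i ∈ S) :
    assemble Z Y i = Z ⟨i, hi⟩ := by
  simp [assemble, hi]

theorem assemble_add_smul (Z₁ Z₂ : S → H → ℝ) (Y : C → H → ℝ) {a b : ℝ} (hab : a + b = 1) :
    assemble (a • Z₁ + b • Z₂) Y = a • assemble Z₁ Y + b • assemble Z₂ Y := by
  funext i
  by_cases hi : i ∈ S
  · simp [assemble_of_mem _ _ hi]
  · simp only [assemble, dif_neg hi, Pi.add_apply, Pi.smul_apply, ← add_smul, hab, one_smul]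

variable [Fintype I] [Fintype H] {M : I → H → ℝ}

theorem IsCouplesProblem.notMem_of_mem_couple (hP : IsCouplesProblem S C M) {c : I × I}
    (hc : c ∈ C) {i : I} (hi : i = c.1 ∨ i = c.2) : i ∉ S := by
  rcases hi with rfl | rfl
  exacts [(hP.2.1 c hc).1, (hP.2.1 c hc).2.1]

theorem IsCouplesProblem.eq_of_mem_couple (hP : IsCouplesProblem S C M) {c c' : I × I}
    (hc : c ∈ C) (hc' : c' ∈ C) {i : I} (hi : i = c.1 ∨ i = c.2) (hi' : i = c'.1 ∨ i = c'.2) :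
    c = c' := by
  by_contra hne
  obtain ⟨h11, h12, h21, h22⟩ := hP.2.2.1 c hc c' hc' hne
  rcases hi with rfl | rfl <;> rcases hi' with h | h <;> simp_all

theorem IsCouplesProblem.sum_eq (hP : IsCouplesProblem S C M) (f : I → ℝ) :
    ∑ i, f i = ∑ s ∈ S, f s + ∑ c ∈ C, (f c.1 + f c.2) := by
  classical
  have hcompl : Sᶜ = C.biUnion fun c => {c.1, c.2} := by
    ext i
    simp only [mem_compl, mem_biUnion, mem_insert, mem_singleton]
    exact ⟨(hP.1 i).resolve_left, fun ⟨c, hc, hi⟩ => hP.notMem_of_mem_couple hc hi⟩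
  rw [← sum_add_sum_compl S, hcompl, sum_biUnion]
  · exact congrArg _ (sum_congr rfl fun c hc => sum_pair (hP.2.1 c hc).2.2)
  · intro c hc c' hc' hne
    exact disjoint_left.mpr fun i hi hi' =>
      hne (hP.eq_of_mem_couple hc hc' (i := i) (by simpa using hi) (by simpa using hi'))

theorem IsCouplesProblem.assemble_of_mem_couple (hP : IsCouplesProblem S C M) (Z : S → H → ℝ)
    (Y : C → H → ℝ) (c : C) {i : I} (hi : i = c.1.1 ∨ i = c.1.2) : assemble Z Y i = Y c := by
  rw [assemble, dif_neg (hP.notMem_of_mem_couple c.2 hi), sum_eq_single c, if_pos hi]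
  · intro c' _ hne
    rw [if_neg fun hi' => hne (Subtype.ext (hP.eq_of_mem_couple c'.2 c.2 hi' hi))]
  · simp

theorem IsCouplesProblem.sum_assemble (hP : IsCouplesProblem S C M) (Z : S → H → ℝ)
    (Y : C → H → ℝ) (h : H) :
    ∑ i, assemble Z Y i h = ∑ s, Z s h + 2 * ∑ c, Y c h := by
  rw [hP.sum_eq, ← sum_coe_sort S, ← sum_coe_sort C, mul_sum]
  congr 1
  · exact sum_congr rfl fun s _ => by rw [assemble_of_mem _ _ s.2]
  · refine sum_congr rfl fun c _ => ?_
    rw [hP.assemble_of_mem_couple Z Y c (.inl rfl), hP.assemble_of_mem_couple Z Y c (.inr rfl)]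
    ring

theorem IsCouplesProblem.isDeterministicAssignment_assemble (hP : IsCouplesProblem S C M)
    {Z : S → H → ℝ} {Y : C → H → ℝ} (hY01 : ∀ c h, Y c h = 0 ∨ Y c h = 1)
    (hYrow : ∀ c, ∑ h, Y c h = 1)
    (hZ : Z ∈ transportPolytope (fun h => ∑ i, M i h - 2 * ∑ c, Y c h)
      (fun h => ∑ i, M i h - 2 * ∑ c, Y c h)) (hZint : Z ∈ integralMatrices) :
    IsDeterministicAssignment C M (assemble Z Y) := by
  have hrow : ∀ i, (∃ hi : i ∈ S, assemble Z Y i = Z ⟨i, hi⟩) ∨ ∃ c, assemble Z Y i = Y c := by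
    intro i
    by_cases hi : i ∈ S
    · exact .inl ⟨hi, assemble_of_mem Z Y hi⟩
    · obtain ⟨c, hc, hic⟩ := (hP.1 i).resolve_left hi
      exact .inr ⟨⟨c, hc⟩, hP.assemble_of_mem_couple Z Y ⟨c, hc⟩ hic⟩
  refine ⟨fun i h => ?_, fun i => ?_, fun c hc h => ?_, fun h => ?_⟩
  · rcases hrow i with ⟨hi, he⟩ | ⟨c, he⟩ <;> rw [he]
    exacts [eq_zero_or_eq_one_of_mem_integralMatrices hZ hZint _ h, hY01 c h]
  · rcases hrow i with ⟨hi, he⟩ | ⟨c, he⟩ <;> rw [he]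
    exacts [hZ.2.1 _, hYrow c]
  · rw [hP.assemble_of_mem_couple Z Y ⟨c, hc⟩ (.inl rfl),
      hP.assemble_of_mem_couple Z Y ⟨c, hc⟩ (.inr rfl)]
  · have := hZ.2.2 h
    rw [hP.sum_assemble]
    linarith [this.1, this.2]

theorem IsCouplesProblem.assemble_mem_convexHull (hP : IsCouplesProblem S C M)
    (hq : ∀ h, ∑ i, M i h ∈ (⊥ : Subring ℝ)) {Z : S → H → ℝ} {Y : C → H → ℝ}
    (hY01 : ∀ c h, Y c h = 0 ∨ Y c h = 1) (hYrow : ∀ c, ∑ h, Y c h = 1)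
    (hZ : Z ∈ transportPolytope (fun h => ∑ i, M i h - 2 * ∑ c, Y c h)
      (fun h => ∑ i, M i h - 2 * ∑ c, Y c h)) :
    assemble Z Y ∈ convexHull ℝ {W | IsDeterministicAssignment C M W} := by
  have hYint : ∀ c h, Y c h ∈ (⊥ : Subring ℝ) := fun c h => by
    rcases hY01 c h with h0 | h1
    exacts [h0 ▸ zero_mem _, h1 ▸ one_mem _]
  have hγ : ∀ h, ∑ i, M i h - 2 * ∑ c, Y c h ∈ (⊥ : Subring ℝ) := fun h =>
    sub_mem (hq h) (mul_mem (by simp) (sum_mem fun c _ => hYint c h))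
  refine convexHull_min (t := {Z | assemble Z Y ∈ convexHull ℝ _}) (fun Z' hZ' =>
      subset_convexHull ℝ _ (hP.isDeterministicAssignment_assemble hY01 hYrow hZ'.1 hZ'.2))
    (fun Z₁ h₁ Z₂ h₂ a b ha hb hab => ?_) (transportPolytope_subset_convexHull hγ hγ hZ)
  rw [Set.mem_ofPred_eq, assemble_add_smul Z₁ Z₂ Y hab]
  exact convex_convexHull ℝ _ h₁ h₂ ha hb hab

def couplesDemand (C : Finset (I × I)) (M : I → H → ℝ) (h : H) : ℝ := ∑ c : C, M c.1.1 h

theorem IsCouplesProblem.couplesMatrix_mem (hP : IsCouplesProblem S C M) :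
    (fun c : C => M c.1.1) ∈ transportPolytope (fun h => ⌊couplesDemand C M h⌋)
      (fun h => ⌈couplesDemand C M h⌉) :=
  ⟨fun _ h => (hP.2.2.2.1 _ h).1, fun _ => hP.2.2.2.2.1 _,
    fun _ => ⟨Int.floor_le _, Int.le_ceil _⟩⟩

theorem IsCouplesProblem.sum_eq_add_two_mul_couplesDemand (hP : IsCouplesProblem S C M) (h : H) :
    ∑ i, M i h = ∑ s ∈ S, M s h + 2 * couplesDemand C M h := by
  rw [hP.sum_eq, couplesDemand, sum_coe_sort C fun c => M c.1 h, mul_sum]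
  congr 1
  exact sum_congr rfl fun c hc => by rw [← hP.2.2.2.2.2 c hc h]; ring

theorem IsCouplesProblem.exists_mem_convexHull_extending (hP : IsCouplesProblem S C M)
    (hq : ∀ h, ∑ i, M i h ∈ (⊥ : Subring ℝ)) (hD : ∀ h, 2 ≤ ∑ s ∈ S, M s h) {Y : C → H → ℝ}
    (hY : Y ∈ transportPolytope (fun h => ⌊couplesDemand C M h⌋)
      (fun h => ⌈couplesDemand C M h⌉)) (hYint : Y ∈ integralMatrices) :
    ∃ W ∈ convexHull ℝ {W | IsDeterministicAssignment C M W},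
      (∀ c : C, ∀ i, i = c.1.1 ∨ i = c.1.2 → W i = Y c) ∧
      ∀ s ∈ S, ∑ h, |M s h - W s h| ≤
        4 * ∑ h, M s h * (∑ c, Y c h - couplesDemand C M h)⁺ / ∑ s ∈ S, M s h := by
  obtain ⟨-, -, -, hM, hMrow, -⟩ := id hP
  set δ := fun h => ∑ c, Y c h - couplesDemand C M h
  have hδ : ∀ h, (δ h)⁺ ≤ 1 := fun h => by
    rw [posPart_def]
    exact sup_le (by linarith [(hY.2.2 h).2, Int.ceil_lt_add_one (couplesDemand C M h)])
      zero_le_one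
  have hδsum : ∑ h, δ h = 0 := by
    simp only [δ, sum_sub_distrib, couplesDemand, sum_sum_eq_card hY.2.1,
      sum_sum_eq_card hP.couplesMatrix_mem.2.1, sub_self]
  have hDS : ∀ h, ∑ s : S, M s h = ∑ s ∈ S, M s h := fun h => sum_coe_sort S fun s => M s h
  obtain ⟨Z, hZ, hZerr⟩ := exists_mem_transportPolytope_shift_colSums (X := fun s : S => M s)
    (fun s h => (hM s h).1) (fun s => hMrow s) (fun h => by rw [hDS]; linarith [hD h])
    (dm := fun h => 2 * (δ h)⁺) (dp := fun h => 2 * (δ h)⁻) (fun h => by positivity)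
    (fun h => by positivity) (fun h => by rw [hDS]; linarith [hD h, hδ h])
    (by rw [← mul_sum, ← mul_sum, ← sub_eq_zero, ← mul_sub, ← sum_sub_distrib]; simp [hδsum])
  have hcol : (fun h => ∑ s : S, M s h + 2 * (δ h)⁻ - 2 * (δ h)⁺) =
      fun h => ∑ i, M i h - 2 * ∑ c, Y c h := funext fun h => by
    rw [hP.sum_eq_add_two_mul_couplesDemand, hDS]
    linarith [posPart_sub_negPart (δ h)]
  rw [hcol] at hZ
  refine ⟨assemble Z Y, hP.assemble_mem_convexHull hq
    (eq_zero_or_eq_one_of_mem_integralMatrices hY hYint) hY.2.1 hZ,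
    fun c i hi => hP.assemble_of_mem_couple Z Y c hi, fun s hs => ?_⟩
  rw [assemble_of_mem Z Y hs]
  refine (hZerr ⟨s, hs⟩).trans_eq ?_
  simp only [hDS, mul_sum]
  exact sum_congr rfl fun h _ => by ring

theorem IsCouplesProblem.exists_mem_convexHull_sum_abs_sub_le (hP : IsCouplesProblem S C M)
    (hq : ∀ h, ∑ i, M i h ∈ (⊥ : Subring ℝ)) (hD : ∀ h, 2 ≤ ∑ s ∈ S, M s h) :
    ∃ W ∈ convexHull ℝ {W | IsDeterministicAssignment C M W},
      ∀ i, ∑ h, |M i h - W i h| ≤ ∑ h, M i h / ∑ s ∈ S, M s h := by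
  obtain ⟨ι, _, p, Y, hp0, hp1, hY, hYmean⟩ := mem_convexHull_iff_exists_fintype.mp
    (transportPolytope_subset_convexHull (by simp) (by simp) hP.couplesMatrix_mem)
  choose W hW hWY hWS using fun ω => hP.exists_mem_convexHull_extending hq hD (hY ω).1 (hY ω).2
  have hmean : ∀ c h, ∑ ω, p ω * Y ω c h = M c.1.1 h := fun c h => by
    simpa [Finset.sum_apply] using congrFun (congrFun hYmean c) h
  refine ⟨∑ ω, p ω • W ω, (convex_convexHull ℝ _).sum_mem (fun ω _ => hp0 ω) hp1 fun ω _ => hW ω,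
    fun i => ?_⟩
  have hDpos : ∀ h, 0 ≤ M i h / ∑ s ∈ S, M s h := fun h =>
    div_nonneg (hP.2.2.2.1 i h).1 (by linarith [hD h])
  simp only [Finset.sum_apply, Pi.smul_apply, smul_eq_mul]
  by_cases hi : i ∈ S
  · have hquarter : ∀ h, ∑ ω, p ω * (∑ c, Y ω c h - couplesDemand C M h)⁺ ≤ 1 / 4 := fun h =>
      sum_mul_posPart_sub_le_quarter hp0 hp1
        (fun ω => sum_mem fun c _ => (hY ω).2 c h) (fun ω => (hY ω).1.2.2 h)
        (by simp only [mul_sum]; rw [sum_comm]; exact sum_congr rfl fun c _ => hmean c h)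
    calc ∑ h, |M i h - ∑ ω, p ω * W ω i h| ≤ ∑ ω, p ω * ∑ h, |M i h - W ω i h| :=
          sum_abs_sub_sum_mul_le _ hp0 hp1 _
      _ ≤ ∑ ω, p ω * (4 * ∑ h, M i h * (∑ c, Y ω c h - couplesDemand C M h)⁺ /
            ∑ s ∈ S, M s h) := by
          gcongr with ω
          · exact hp0 ω
          · exact hWS ω i hi
      _ = ∑ h, M i h / (∑ s ∈ S, M s h) *
            (4 * ∑ ω, p ω * (∑ c, Y ω c h - couplesDemand C M h)⁺) := by
          simp only [mul_sum]
          rw [sum_comm]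
          refine sum_congr rfl fun h _ => ?_
          exact sum_congr rfl fun ω _ => by ring
      _ ≤ ∑ h, M i h / ∑ s ∈ S, M s h := sum_le_sum fun h _ =>
          mul_le_of_le_one_right (hDpos h) (by linarith [hquarter h])
  · obtain ⟨c, hc, hic⟩ := (hP.1 i).resolve_left hi
    have hexact : ∀ h, ∑ ω, p ω * W ω i h = M i h := fun h => by
      simp only [hWY _ ⟨c, hc⟩ i hic, hmean]
      rcases hic with rfl | rfl
      exacts [rfl, hP.2.2.2.2.2 c hc h]
    simp only [hexact, sub_self, abs_zero, sum_const_zero]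
    exact sum_nonneg fun h _ => hDpos h

end Couples

/-- upper bound in terms of minimal singles' demand: every assignment
problem with couples whose hospital capacities are positive integers and whose singles'
demand `D_h = ∑_{s ∈ S} M_{s,h}` is at least `2` at every hospital admits a convex
combination of deterministic assignment matrices with approximation error at most
`1 / min_h D_h`. -/
theorem upper_bound_singles_demand {I H : Type*} [Fintype I] [Fintype H] [Nonempty H]
    (S : Finset I) (C : Finset (I × I)) (M : I → H → ℝ)
    (hP : IsCouplesProblem S C M)
    (hq : ∀ h : H, ∃ m : ℕ, 0 < m ∧ ∑ i : I, M i h = m)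
    (hD : ∀ h : H, 2 ≤ ∑ s ∈ S, M s h) :
    ∃ (K : ℕ) (lam : Fin K → ℝ) (Ms : Fin K → I → H → ℝ),
      (∀ k, 0 ≤ lam k) ∧ (∑ k, lam k = 1) ∧
      (∀ k, IsDeterministicAssignment C M (Ms k)) ∧
      ∀ i : I, ∑ h : H, |M i h - ∑ k, lam k * Ms k i h| ≤
        1 / (Finset.univ.inf' Finset.univ_nonempty fun h : H => ∑ s ∈ S, M s h) := by
  set D := Finset.univ.inf' Finset.univ_nonempty fun h : H => ∑ s ∈ S, M s h
  have hDpos : 0 < D := lt_of_lt_of_le two_pos (le_inf' _ _ fun h _ => hD h)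
  obtain ⟨W, hW, hWerr⟩ := hP.exists_mem_convexHull_sum_abs_sub_le
    (fun h => by obtain ⟨m, -, hm⟩ := hq h; exact hm ▸ natCast_mem _ m) hD
  obtain ⟨K, lam, Ms, hlam0, hlam1, hMs, rfl⟩ := exists_fin_combination_of_mem_convexHull hW
  refine ⟨K, lam, Ms, hlam0, hlam1, hMs, fun i => ?_⟩
  calc ∑ h, |M i h - ∑ k, lam k * Ms k i h| ≤ ∑ h, M i h / ∑ s ∈ S, M s h := by
        simpa [Finset.sum_apply] using hWerr i
    _ ≤ ∑ h, M i h / D := sum_le_sum fun h _ =>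
        div_le_div_of_nonneg_left (hP.2.2.2.1 i h).1 hDpos (inf'_le _ (mem_univ h))
    _ = 1 / D := by rw [← sum_div, hP.2.2.2.2.1 i]
end
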